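/- For every partition λ with conjugate λ', one has H(λ) = −G(λ') in the field ℚ(p): that is, Σ_{i=1}^{ℓ(λ)} p^{λ_i−i} + p^{−ℓ(λ)}/(p−1) = −( Σ_{i=1}^{ℓ(λ')} p^{−λ'_i+i−1} + p^{ℓ(λ')}/(1−p) ). (This is the regularized form of the identity s_□(p^{λ+ρ}) = −s_□(p^{−λ'−ρ}), i.e. Σ_{i≥1} p^{λ_i−i+1/2} = −Σ_{i≥1} p^{−λ'_i+i−1/2} after summing the geometric tails as rational functions.) -/

import Mathlib

/-! Write `λ_j` for the length of column `j` and `λ'_i` for the length of row `i`. Expanding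
`x ^ λ_j = 1 + (x - 1) ∑_{i < λ_j} x ^ i` in `H(λ)` and
`x ^ (-λ'_i) = 1 - (x - 1) ∑_{j < λ'_i} x ^ (-j-1)` in `G(λ')`, the regularized geometric series
that remain sum to `1 / (x - 1)` and `1 / (1 - x)`, and the two corrections are `±(x - 1)` times
one and the same sum `∑_{(i, j) ∈ λ} x ^ (i - j - 1)` over the cells of `λ`, read once column by
column and once row by row.
-/

noncomputable section

/-- The regularized sum G(λ) = Σ_{i=1}^{ℓ} p^{−λ_i+i−1} + p^{ℓ}/(1−p) ∈ ℚ(p),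
the regularization of Σ_{i≥1} p^{−λ_i+i−1}.  Here the parts of λ are
λ_i = colLen (i−1) and ℓ = rowLen 0 is the number of nonzero parts. -/
def Gfun (μ : YoungDiagram) : RatFunc ℚ :=
  (∑ j ∈ Finset.range (μ.rowLen 0), RatFunc.X ^ j * (RatFunc.X ^ μ.colLen j)⁻¹) +
    RatFunc.X ^ μ.rowLen 0 * (1 - RatFunc.X)⁻¹

/-- The regularized sum H(λ) = Σ_{i=1}^{ℓ} p^{λ_i−i} + p^{−ℓ}/(p−1) ∈ ℚ(p),
the regularization of Σ_{i≥1} p^{λ_i−i}. -/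
def Hfun (μ : YoungDiagram) : RatFunc ℚ :=
  (∑ j ∈ Finset.range (μ.rowLen 0), RatFunc.X ^ μ.colLen j * (RatFunc.X ^ (j + 1))⁻¹) +
    (RatFunc.X ^ μ.rowLen 0)⁻¹ * (RatFunc.X - 1)⁻¹

open Finset

section GeomSum

variable {K : Type*} [Field K] {x : K}

theorem inv_pow_eq_one_sub_mul_sum_inv_pow_succ (hx : x ≠ 0) (n : ℕ) :
    (x ^ n)⁻¹ = 1 - (x - 1) * ∑ j ∈ range n, (x ^ (j + 1))⁻¹ := by
  induction n with
  | zero => simp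
  | succ n ih =>
    rw [sum_range_succ, mul_add, ← sub_sub, ← ih]
    field_simp
    ring

theorem sum_inv_pow_succ_add_inv_pow_mul_inv_sub_one (hx₀ : x ≠ 0) (hx₁ : x ≠ 1) (n : ℕ) :
    ∑ j ∈ range n, (x ^ (j + 1))⁻¹ + (x ^ n)⁻¹ * (x - 1)⁻¹ = (x - 1)⁻¹ := by
  have : x - 1 ≠ 0 := sub_ne_zero.2 hx₁
  rw [inv_pow_eq_one_sub_mul_sum_inv_pow_succ hx₀]
  field_simp
  ring

theorem geom_sum_add_pow_mul_inv_one_sub (hx : x ≠ 1) (n : ℕ) :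
    ∑ k ∈ range n, x ^ k + x ^ n * (1 - x)⁻¹ = (1 - x)⁻¹ := by
  have : 1 - x ≠ 0 := sub_ne_zero.2 hx.symm
  rw [geom_sum_eq hx]
  field_simp
  ring

end GeomSum

namespace YoungDiagram

theorem mem_iff_lt_rowLen_zero_and_lt_colLen {μ : YoungDiagram} {i j : ℕ} :
    (i, j) ∈ μ ↔ j < μ.rowLen 0 ∧ i < μ.colLen j := by
  refine ⟨fun h => ⟨?_, mem_iff_lt_colLen.1 h⟩, fun h => mem_iff_lt_colLen.2 h.2⟩
  exact mem_iff_lt_rowLen.1 (μ.up_left_mem (Nat.zero_le i) le_rfl h)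

section CellSums

variable {β : Type*} [AddCommMonoid β]

theorem sum_cells_eq_sum_cols (μ : YoungDiagram) (f : ℕ × ℕ → β) :
    ∑ c ∈ μ.cells, f c = ∑ j ∈ range (μ.rowLen 0), ∑ i ∈ range (μ.colLen j), f (i, j) :=
  sum_finset_product_right _ _ _ fun ⟨_, _⟩ => by
    simp [mem_cells, mem_iff_lt_rowLen_zero_and_lt_colLen]

theorem sum_cells_eq_sum_rows (μ : YoungDiagram) (f : ℕ × ℕ → β) :
    ∑ c ∈ μ.cells, f c = ∑ i ∈ range (μ.colLen 0), ∑ j ∈ range (μ.rowLen i), f (i, j) := by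
  have hT := μ.transpose.sum_cells_eq_sum_cols (f ∘ Prod.swap)
  simp only [rowLen_transpose, colLen_transpose, Function.comp_apply, Prod.swap_prod_mk] at hT
  rw [← hT]
  exact (sum_equiv (Equiv.prodComm ℕ ℕ) (by simp [mem_cells]) fun _ _ => rfl).symm

end CellSums

variable {K : Type*} [Field K] {x : K}

theorem sum_cols_add_geom_tail_eq (μ : YoungDiagram) (hx₀ : x ≠ 0) (hx₁ : x ≠ 1) :
    ∑ j ∈ range (μ.rowLen 0), x ^ μ.colLen j * (x ^ (j + 1))⁻¹ +
        (x ^ μ.rowLen 0)⁻¹ * (x - 1)⁻¹ =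
      (x - 1)⁻¹ + (x - 1) * ∑ c ∈ μ.cells, x ^ c.1 * (x ^ (c.2 + 1))⁻¹ := by
  calc _ = ∑ j ∈ range (μ.rowLen 0), ((x ^ (j + 1))⁻¹ +
          (x - 1) * ∑ i ∈ range (μ.colLen j), x ^ i * (x ^ (j + 1))⁻¹) +
        (x ^ μ.rowLen 0)⁻¹ * (x - 1)⁻¹ := by
        congr 1
        refine sum_congr rfl fun j _ => ?_
        rw [← sum_mul, ← mul_assoc, mul_comm (x - 1), geom_sum_mul]
        ring
    _ = _ := by
      rw [sum_add_distrib, ← mul_sum, sum_cells_eq_sum_cols]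
      linear_combination sum_inv_pow_succ_add_inv_pow_mul_inv_sub_one hx₀ hx₁ (μ.rowLen 0)

theorem sum_rows_add_geom_tail_eq (μ : YoungDiagram) (hx₀ : x ≠ 0) (hx₁ : x ≠ 1) :
    ∑ i ∈ range (μ.colLen 0), x ^ i * (x ^ μ.rowLen i)⁻¹ + x ^ μ.colLen 0 * (1 - x)⁻¹ =
      (1 - x)⁻¹ - (x - 1) * ∑ c ∈ μ.cells, x ^ c.1 * (x ^ (c.2 + 1))⁻¹ := by
  calc _ = ∑ i ∈ range (μ.colLen 0), (x ^ i -
          (x - 1) * ∑ j ∈ range (μ.rowLen i), x ^ i * (x ^ (j + 1))⁻¹) +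
        x ^ μ.colLen 0 * (1 - x)⁻¹ := by
        congr 1
        refine sum_congr rfl fun i _ => ?_
        rw [inv_pow_eq_one_sub_mul_sum_inv_pow_succ hx₀, ← mul_sum]
        ring
    _ = _ := by
      rw [sum_sub_distrib, ← mul_sum, sum_cells_eq_sum_rows]
      linear_combination geom_sum_add_pow_mul_inv_one_sub hx₁ (μ.colLen 0)

end YoungDiagram

/-- For every partition λ, H(λ) = −G(λ') in ℚ(p), where λ' is the
conjugate (transpose) partition. -/
theorem statement13 (μ : YoungDiagram) : Hfun μ = -Gfun μ.transpose := by
  have hX₀ : (RatFunc.X : RatFunc ℚ) ≠ 0 := RatFunc.X_ne_zero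
  have hX₁ : (RatFunc.X : RatFunc ℚ) ≠ 1 := fun h => by
    simpa using congrArg RatFunc.intDegree h
  rw [Hfun, Gfun, YoungDiagram.rowLen_transpose]
  simp only [YoungDiagram.colLen_transpose]
  rw [μ.sum_cols_add_geom_tail_eq hX₀ hX₁, μ.sum_rows_add_geom_tail_eq hX₀ hX₁, ← neg_sub,
    inv_neg]
  ring
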